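/- arXiv:math/0503706 — 4 statements merged into one kernel-verified Lean document; each statement's English description precedes it below -/
import Mathlib

section
/- For every rational number p/q in lowest terms with q ≥ 1, there exists a unique periodic orbit of the doubling map x ↦ 2x mod 1 on the circle ℝ/ℤ whose points are arranged in the same cyclic order as an orbit of the rigid rotation by p/q; this orbit has period exactly q. -/
noncomputable section

/-- The doubling map on the circle ℝ/ℤ. -/
def dbl (x : AddCircle (1:ℝ)) : AddCircle (1:ℝ) := x + x

/-- `O` is a periodic Sturmian orbit of the doubling map with combinatorial rotation
number `p/q`: there is a `q`-periodic enumeration of `O`, injective over one period,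
arranged in cyclic order, on which the doubling map acts as the rotation `j ↦ j + p`. -/
def IsSturmianOrbit (p q : ℕ) (O : Set (AddCircle (1:ℝ))) : Prop :=
  ∃ e : ℕ → AddCircle (1:ℝ),
    (∀ n, e (n + q) = e n) ∧
    Set.InjOn e (Set.Iio q) ∧
    O = Set.range e ∧
    (∀ i j k : ℕ, i < j → j < k → k < q → sbtw (e i) (e j) (e k)) ∧
    (∀ n, dbl (e n) = e (n + p))

/-!
Enumerate a Sturmian orbit counterclockwise by representatives `x₀ < x₁ < ⋯ < x_{q-1}` in
`[0, 1)`, so that doubling acts as `i ↦ i + p (mod q)`, and write `2 xᵢ = dᵢ + x_{i+p}` with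
`dᵢ ∈ {0, 1}`. The digits `dᵢ` are monotone in `i`, and the adjacent indices `q - 1 - r` and
`q - r` (`r = p mod q`) are sent to the last and the first point, so `dᵢ = 1` exactly for the last
`r` indices: `dᵢ` is the carry of `i + p` past `q`. Iterating `q` times gives
`(2^q - 1) xᵢ = ∑ₖ d_{i+kp} 2^{q-1-k}`, which pins the orbit down. Conversely these values do
form a Sturmian orbit: they are increasing in `i`, because the binary word of `i + 1` is that of
`i` with one block `01` replaced by `10`.
-/

namespace Sturmian

open Finset Function

local notation "𝕋" => AddCircle (1 : ℝ)

lemma coe_injOn_Ico : Set.InjOn ((↑) : ℝ → 𝕋) (Set.Ico 0 1) := fun x hx y hy h =>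
  (AddCircle.coe_eq_coe_iff_of_mem_Ico (a := 0) (by rwa [zero_add]) (by rwa [zero_add])).1 h

lemma sbtw_coe_iff {x y z : ℝ} (hx : 0 ≤ x) (hxy : x < y) (hy : y < 1) (hxz : x < z)
    (hz : z < 1) : sbtw (x : 𝕋) y z ↔ y < z := by
  have h1 : (0 : ℝ) < 1 := one_pos
  have hbtw : btw (x : 𝕋) y z ↔ y ≤ z := by
    rw [QuotientAddGroup.btw_coe_iff, (toIcoMod_eq_self h1).2 ⟨hxy.le, by linarith⟩,
      (toIocMod_eq_self h1).2 ⟨hxz, by linarith⟩]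
  refine ⟨fun h => (hbtw.1 h.btw).lt_of_ne ?_,
    fun hyz => sbtw_iff_btw_not_btw.2 ⟨hbtw.2 hyz.le, ?_⟩⟩
  · rintro rfl
    exact sbtw_irrefl_right h
  · have hy' : toIcoMod h1 z y = y + 1 :=
      (toIcoMod_eq_iff h1).2 ⟨⟨by linarith, by linarith⟩, ⟨-1, by simp⟩⟩
    have hx' : toIocMod h1 z x = x + 1 :=
      (toIocMod_eq_iff h1).2 ⟨⟨by linarith, by linarith⟩, ⟨-1, by simp⟩⟩
    rw [QuotientAddGroup.btw_coe_iff, hy', hx']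
    linarith

lemma coe_add_natCast (x : ℝ) (m : ℕ) : ((x + m : ℝ) : 𝕋) = x := by
  rw [AddCircle.coe_add, ← nsmul_one, AddCircle.coe_nsmul, AddCircle.coe_period, smul_zero,
    add_zero]

def rep (x : 𝕋) : ℝ := AddCircle.equivIco 1 0 x

lemma rep_mem_Ico (x : 𝕋) : rep x ∈ Set.Ico (0 : ℝ) 1 := by
  obtain ⟨h0, h1⟩ := (AddCircle.equivIco (1 : ℝ) 0 x).2
  exact ⟨h0, h1.trans_eq (zero_add 1)⟩

lemma coe_rep (x : 𝕋) : (rep x : 𝕋) = x := AddCircle.coe_equivIco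

def leadingBit (x : ℝ) : ℕ := if 1 ≤ 2 * x then 1 else 0

lemma two_mul_eq_leadingBit_add {x y : ℝ} (hx : x ∈ Set.Ico (0 : ℝ) 1)
    (hy : y ∈ Set.Ico (0 : ℝ) 1) (h : dbl x = y) : 2 * x = leadingBit x + y := by
  have h2 : ((2 * x : ℝ) : 𝕋) = y := by rw [two_mul, AddCircle.coe_add]; exact h
  unfold leadingBit
  split_ifs with hx1
  · have h3 : ((2 * x - 1 : ℝ) : 𝕋) = y := by
      rw [AddCircle.coe_sub, h2, AddCircle.coe_period, sub_zero]
    have := coe_injOn_Ico ⟨by linarith, by linarith [hx.2]⟩ hy h3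
    push_cast
    linarith
  · push_cast
    rw [zero_add]
    exact coe_injOn_Ico ⟨by linarith [hx.1], by linarith⟩ hy h2

section CyclicOrder

variable {α : Type*} [CircularPreorder α] {q : ℕ} {e : ℕ → α}

def IsCyclicallyOrdered (q : ℕ) (e : ℕ → α) : Prop :=
  ∀ i j k : ℕ, i < j → j < k → k < q → sbtw (e i) (e j) (e k)

lemma IsCyclicallyOrdered.comp_add_one (h : IsCyclicallyOrdered q e) (hper : Periodic e q) :
    IsCyclicallyOrdered q (fun n => e (n + 1)) := by
  intro i j k hij hjk hkq
  rcases (Nat.succ_le_of_lt hkq).lt_or_eq with hk | hk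
  · exact h _ _ _ (by omega) (by omega) hk
  · obtain rfl := hk
    have he : e (k + 1) = e 0 := by simpa using hper 0
    simp only [he]
    exact (h 0 (i + 1) (j + 1) (by omega) (by omega) (by omega)).cyclic_left

lemma IsCyclicallyOrdered.comp_add (h : IsCyclicallyOrdered q e) (hper : Periodic e q) (s : ℕ) :
    IsCyclicallyOrdered q (fun n => e (n + s)) := by
  induction s with
  | zero => exact h
  | succ s ih =>
    simpa only [add_assoc, Nat.add_comm 1 s] using ih.comp_add_one (hper.add_const s)

end CyclicOrder

lemma _root_.Function.Periodic.range_comp_add {β : Type*} {q : ℕ} {f : ℕ → β}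
    (hper : Periodic f q) (hq : 0 < q) (s : ℕ) :
    Set.range (fun n => f (n + s)) = Set.range f := by
  refine (Set.range_comp_subset_range _ f).antisymm ?_
  rintro _ ⟨m, rfl⟩
  refine ⟨m + s * q - s, ?_⟩
  show f (m + s * q - s + s) = f m
  rw [Nat.sub_add_cancel (le_add_left (Nat.le_mul_of_pos_right s hq))]
  exact hper.nat_mul s m

lemma _root_.Function.Periodic.modEq_of_injOn {β : Type*} {q : ℕ} {f : ℕ → β}
    (hper : Periodic f q) (hq : 0 < q) (hinj : Set.InjOn f (Set.Iio q)) {a b : ℕ}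
    (h : f a = f b) : a ≡ b [MOD q] :=
  hinj (Nat.mod_lt _ hq) (Nat.mod_lt _ hq) (by rwa [hper.map_mod_nat, hper.map_mod_nat])

lemma strictMonoOn_rep_of_isCyclicallyOrdered {q : ℕ} {f : ℕ → 𝕋}
    (hord : IsCyclicallyOrdered q f) (h0 : ∀ n, 0 < n → n < q → rep (f 0) < rep (f n)) :
    StrictMonoOn (fun n => rep (f n)) (Set.Iio q) := by
  intro i hi j hj hij
  rcases Nat.eq_zero_or_pos i with rfl | hi0
  · exact h0 j hij hj
  · have h := hord 0 i j hi0 hij hj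
    rw [← coe_rep (f 0), ← coe_rep (f i), ← coe_rep (f j)] at h
    exact (sbtw_coe_iff (rep_mem_Ico _).1 (h0 i hi0 hi) (rep_mem_Ico _).2
      (h0 j (hi0.trans hij) hj) (rep_mem_Ico _).2).1 h

lemma exists_strictMonoOn_rep_comp_add {q : ℕ} (hq : 0 < q) {e : ℕ → 𝕋}
    (hper : Periodic e q) (hinj : Set.InjOn e (Set.Iio q)) (hord : IsCyclicallyOrdered q e) :
    ∃ s, StrictMonoOn (fun n => rep (e (n + s))) (Set.Iio q) := by
  obtain ⟨s, -, hs⟩ :=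
    exists_min_image (range q) (fun m => rep (e m)) ⟨0, mem_range.2 hq⟩
  refine ⟨s, strictMonoOn_rep_of_isCyclicallyOrdered (hord.comp_add hper s) fun n hn hnq => ?_⟩
  have hle : rep (e (0 + s)) ≤ rep (e (n + s)) := by
    rw [zero_add, ← hper.map_mod_nat (n + s)]
    exact hs _ (mem_range.2 (Nat.mod_lt _ hq))
  refine hle.lt_of_ne fun h => ?_
  have hmod : 0 + s ≡ n + s [MOD q] :=
    hper.modEq_of_injOn hq hinj (by rw [← coe_rep (e (0 + s)), h, coe_rep])
  have := Nat.ModEq.add_right_cancel' s hmod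
  rw [Nat.ModEq, Nat.zero_mod, Nat.mod_eq_of_lt hnq] at this
  omega

section Code

variable {p q : ℕ}

def code (d : ℕ → ℕ) (p q n : ℕ) : ℕ := ∑ k ∈ range q, d (n + k * p) * 2 ^ (q - 1 - k)

lemma code_periodic {d : ℕ → ℕ} (hd : Periodic d q) : Periodic (code d p q) q := fun n =>
  sum_congr rfl fun k _ => by rw [Nat.add_right_comm, hd]

lemma two_mul_code_add {d : ℕ → ℕ} (hd : Periodic d q) (n : ℕ) :
    2 * code d p q n + d n = d n * 2 ^ q + code d p q (n + p) := by
  set f : ℕ → ℕ := fun j => d (n + j * p) * 2 ^ (q - j)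
  have hlow : ∑ j ∈ range q, f j = 2 * code d p q n := by
    rw [code, mul_sum]
    refine sum_congr rfl fun j hj => ?_
    show d (n + j * p) * 2 ^ (q - j) = _
    rw [show q - j = q - 1 - j + 1 by have := mem_range.1 hj; omega, pow_succ]
    ring
  have hhigh : ∑ j ∈ range q, f (j + 1) = code d p q (n + p) :=
    sum_congr rfl fun j _ => by
      simp only [f, add_mul, one_mul, ← add_assoc, Nat.add_right_comm n, Nat.sub_sub]
      ring_nf
  have hlast : f q = d n := by
    simp only [f, Nat.sub_self, pow_zero, mul_one, mul_comm q p]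
    exact hd.nat_mul p n
  have hsplit := (sum_range_succ f q).symm.trans (sum_range_succ' f q)
  rw [hlow, hhigh, hlast] at hsplit
  simpa [f, add_comm] using hsplit

variable {u : ℕ → ℝ} {d : ℕ → ℕ}

lemma two_pow_mul_eq_sum_add (h : ∀ n, 2 * u n = d n + u (n + p)) (k n : ℕ) :
    2 ^ k * u n = ∑ i ∈ range k, (d (n + i * p) : ℝ) * 2 ^ (k - 1 - i) + u (n + k * p) := by
  induction k generalizing n with
  | zero => simp
  | succ k ih =>
    rw [sum_range_succ', pow_succ, mul_assoc, h, mul_add, ih (n + p)]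
    have hsum : ∀ i ∈ range k, (d (n + p + i * p) : ℝ) * 2 ^ (k - 1 - i)
        = d (n + (i + 1) * p) * 2 ^ (k + 1 - 1 - (i + 1)) := fun i _ => by
      rw [show n + (i + 1) * p = n + p + i * p by ring,
        show k + 1 - 1 - (i + 1) = k - 1 - i by omega]
    rw [sum_congr rfl hsum, show n + p + k * p = n + (k + 1) * p by ring]
    simp only [zero_mul, add_zero, Nat.add_sub_cancel, Nat.sub_zero]
    ring

lemma mul_eq_code (hu : Periodic u q) (h : ∀ n, 2 * u n = d n + u (n + p)) (n : ℕ) :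
    (2 ^ q - 1) * u n = code d p q n := by
  have hrec := two_pow_mul_eq_sum_add h q n
  have hper : u (n + p * q) = u n := hu.nat_mul p n
  rw [mul_comm q p, hper] at hrec
  rw [code]
  push_cast
  linarith

end Code

section Carry

variable {p q : ℕ}

def carry (p q n : ℕ) : ℕ := if q ≤ n % q + p % q then 1 else 0

lemma carry_periodic : Periodic (carry p q) q := fun n => by simp only [carry, Nat.add_mod_right]

lemma mod_pos_of_coprime (hpq : p.Coprime q) (hq : 2 ≤ q) : 0 < p % q := by
  refine Nat.pos_of_ne_zero fun h => ?_
  have := hpq.symm.eq_one_of_dvd (Nat.dvd_of_mod_eq_zero h)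
  omega

lemma carry_succ_add_ite (hq : 0 < q) (hr : 0 < p % q) (m : ℕ) :
    carry p q (m + 1) + (if m % q = q - 1 then 1 else 0) =
      carry p q m + (if m % q = q - 1 - p % q then 1 else 0) := by
  have hm := Nat.mod_lt m hq
  have hr' := Nat.mod_lt p hq
  have h1 : 1 % q ≤ 1 := Nat.mod_le 1 q
  unfold carry
  rw [Nat.add_mod_eq_ite (m := m) (n := 1)]
  rcases Nat.lt_or_ge 1 q with hq1 | hq1
  · rw [Nat.mod_eq_of_lt hq1]
    split_ifs <;> omega
  · omega

lemma add_mul_mod_injOn (hpq : p.Coprime q) (n : ℕ) :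
    Set.InjOn (fun k => (n + k * p) % q) (Set.Iio q) := fun _ hk _ hk' h =>
  (Nat.ModEq.cancel_right_of_coprime hpq.symm (Nat.ModEq.add_left_cancel' n h)).eq_of_lt_of_lt
    hk hk'

lemma exists_add_mul_mod_eq (hq : 0 < q) (hpq : p.Coprime q) (n : ℕ) {a : ℕ} (ha : a < q) :
    ∃ k < q, (n + k * p) % q = a := by
  have hsurj := surjOn_of_injOn_of_card_le (s := range q) (t := range q)
    (fun k => (n + k * p) % q) (fun k _ => by simpa using Nat.mod_lt _ hq)
    (by simpa only [coe_range] using add_mul_mod_injOn hpq n) le_rfl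
  obtain ⟨k, hk, hka⟩ := hsurj (mem_range.2 ha)
  exact ⟨k, mem_range.1 hk, hka⟩

lemma sum_ite_add_mul_mod_eq (hpq : p.Coprime q) {n a k₀ : ℕ} (hk₀ : k₀ < q)
    (ha : (n + k₀ * p) % q = a) (f : ℕ → ℕ) :
    ∑ k ∈ range q, (if (n + k * p) % q = a then f k else 0) = f k₀ := by
  rw [sum_eq_single_of_mem k₀ (mem_range.2 hk₀) fun k hk hne =>
    if_neg fun h => hne (add_mul_mod_injOn hpq n (mem_range.1 hk) hk₀ (h.trans ha.symm))]
  exact if_pos ha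

lemma code_carry_add_one_lt (hq : 0 < q) (hpq : p.Coprime q) (n : ℕ) :
    code (carry p q) p q n + 1 < 2 ^ q := by
  obtain ⟨k₀, hk₀, hres⟩ := exists_add_mul_mod_eq hq hpq n hq
  have hlt : code (carry p q) p q n < ∑ k ∈ range q, 2 ^ (q - 1 - k) := by
    refine sum_lt_sum (fun k _ => ?_) ⟨k₀, mem_range.2 hk₀, ?_⟩
    · unfold carry; split_ifs <;> simp
    · simp [carry, hres, not_le.2 (Nat.mod_lt p hq)]
  have hgeom : ∑ k ∈ range q, 2 ^ (q - 1 - k) + 1 = 2 ^ q := by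
    rw [sum_range_reflect (2 ^ ·) q, Nat.geomSum_eq le_rfl q]
    simpa using Nat.sub_add_cancel (Nat.one_le_two_pow)
  omega

lemma code_carry_lt_succ (hpq : p.Coprime q) {n : ℕ} (hn : n + 1 < q) :
    code (carry p q) p q n < code (carry p q) p q (n + 1) := by
  have hq : 0 < q := by omega
  have hr := mod_pos_of_coprime hpq (by omega)
  have hr' := Nat.mod_lt p hq
  obtain ⟨k₁, hk₁, hres⟩ := exists_add_mul_mod_eq hq hpq n (a := q - 1 - p % q) (by omega)
  have hres' : (n + (k₁ + 1) * p) % q = q - 1 := by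
    rw [add_one_mul, ← add_assoc, Nat.add_mod, hres]
    rw [Nat.mod_eq_of_lt (by omega : q - 1 - p % q + p % q < q)]
    omega
  have hk₁' : k₁ + 1 < q := by
    refine lt_of_le_of_ne (by omega) fun h => ?_
    rw [h, Nat.add_mul_mod_self_left, Nat.mod_eq_of_lt (by omega)] at hres'
    omega
  -- From `n` to `n + 1`, the digit at step `k₁` turns on and that at step `k₁ + 1` turns off.
  have key : ∑ k ∈ range q,
      (carry p q (n + 1 + k * p) + (if (n + k * p) % q = q - 1 then 1 else 0)) * 2 ^ (q - 1 - k) =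
      ∑ k ∈ range q,
      (carry p q (n + k * p) + (if (n + k * p) % q = q - 1 - p % q then 1 else 0)) *
        2 ^ (q - 1 - k) :=
    sum_congr rfl fun k _ => by rw [Nat.add_right_comm, carry_succ_add_ite hq hr]
  simp only [add_mul, sum_add_distrib, ite_mul, one_mul, zero_mul] at key
  rw [sum_ite_add_mul_mod_eq hpq hk₁' hres', sum_ite_add_mul_mod_eq hpq hk₁ hres] at key
  have hw : 2 ^ (q - 1 - (k₁ + 1)) < 2 ^ (q - 1 - k₁) :=
    Nat.pow_lt_pow_right (by norm_num) (by omega)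
  unfold code
  omega

end Carry

section Orbit

variable {p q : ℕ}

def sturmValue (p q n : ℕ) : ℝ := code (carry p q) p q n / (2 ^ q - 1)

def sturmPoint (p q n : ℕ) : 𝕋 := sturmValue p q n

lemma two_pow_sub_one_pos (hq : 0 < q) : (0 : ℝ) < 2 ^ q - 1 :=
  sub_pos.2 (one_lt_pow₀ one_lt_two hq.ne')

lemma sturmValue_mem_Ico (hq : 0 < q) (hpq : p.Coprime q) (n : ℕ) :
    sturmValue p q n ∈ Set.Ico (0 : ℝ) 1 := by
  have hlt : (code (carry p q) p q n : ℝ) + 1 < 2 ^ q := by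
    exact_mod_cast code_carry_add_one_lt hq hpq n
  have hpos := two_pow_sub_one_pos hq
  exact ⟨by unfold sturmValue; positivity, (div_lt_one hpos).2 (by linarith)⟩

lemma sturmValue_strictMonoOn (hpq : p.Coprime q) : StrictMonoOn (sturmValue p q) (Set.Iio q) :=
  strictMonoOn_of_lt_succ Set.ordConnected_Iio fun n _ _ hn => by
    rw [Order.succ_eq_add_one, Set.mem_Iio] at hn
    exact div_lt_div_of_pos_right (by exact_mod_cast code_carry_lt_succ hpq hn)
      (two_pow_sub_one_pos (by omega))

lemma sturmPoint_periodic : Periodic (sturmPoint p q) q := fun n => by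
  simp only [sturmPoint, sturmValue, code_periodic carry_periodic n]

lemma dbl_sturmPoint (hq : 0 < q) (n : ℕ) : dbl (sturmPoint p q n) = sturmPoint p q (n + p) := by
  have hrel : (2 * code (carry p q) p q n + carry p q n : ℝ) =
      carry p q n * 2 ^ q + code (carry p q) p q (n + p) := by
    exact_mod_cast two_mul_code_add carry_periodic n
  have htwo : sturmValue p q n + sturmValue p q n = sturmValue p q (n + p) + carry p q n := by
    have := (two_pow_sub_one_pos hq).ne'
    unfold sturmValue
    field_simp
    linarith
  rw [dbl, sturmPoint, ← AddCircle.coe_add, htwo, coe_add_natCast]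
  rfl

theorem isSturmianOrbit_range_sturmPoint (hq : 0 < q) (hpq : p.Coprime q) :
    IsSturmianOrbit p q (Set.range (sturmPoint p q)) := by
  have hmem := sturmValue_mem_Ico hq hpq
  have hmono := sturmValue_strictMonoOn hpq
  refine ⟨sturmPoint p q, sturmPoint_periodic, ?_, rfl, fun i j k hij hjk hk => ?_,
    dbl_sturmPoint hq⟩
  · exact coe_injOn_Ico.comp hmono.injOn fun n _ => hmem n
  · have hi : i < q := hij.trans (hjk.trans hk)
    exact (sbtw_coe_iff (hmem i).1 (hmono hi (hjk.trans hk) hij) (hmem j).2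
      (hmono hi hk (hij.trans hjk)) (hmem k).2).2 (hmono (hjk.trans hk) hk hjk)

lemma two_mul_lt_one_and_one_le_two_mul (hq : 2 ≤ q) (hpq : p.Coprime q) {u : ℕ → ℝ}
    (hu : Periodic u q) (hmono : StrictMonoOn u (Set.Iio q))
    (h : ∀ n, 2 * u n = leadingBit (u n) + u (n + p)) :
    2 * u (q - 1 - p % q) < 1 ∧ 1 ≤ 2 * u (q - p % q) := by
  have hr := mod_pos_of_coprime hpq hq
  have hr' := Nat.mod_lt p (show 0 < q by omega)
  -- The adjacent indices `q - 1 - p % q < q - p % q` are sent to the last and the first point.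
  have ha := h (q - 1 - p % q)
  have hb := h (q - p % q)
  rw [← hu.map_mod_nat (q - 1 - p % q + p), ← Nat.add_mod_mod (q - 1 - p % q),
    show q - 1 - p % q + p % q = q - 1 by omega, Nat.mod_eq_of_lt (show q - 1 < q by omega)] at ha
  rw [← hu.map_mod_nat (q - p % q + p), ← Nat.add_mod_mod (q - p % q),
    show q - p % q + p % q = q by omega, Nat.mod_self] at hb
  have hab := hmono (show q - 1 - p % q < q by omega) (show q - p % q < q by omega)
    (show q - 1 - p % q < q - p % q by omega)
  have hends := hmono (show 0 < q by omega) (show q - 1 < q by omega) (show 0 < q - 1 by omega)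
  unfold leadingBit at ha hb
  split_ifs at ha hb <;> push_cast at ha hb <;> constructor <;> linarith

lemma leadingBit_eq_carry (hq : 0 < q) (hpq : p.Coprime q) {u : ℕ → ℝ} (hu : Periodic u q)
    (hmono : StrictMonoOn u (Set.Iio q)) (hu1 : ∀ n, u n < 1)
    (h : ∀ n, 2 * u n = leadingBit (u n) + u (n + p)) (n : ℕ) :
    leadingBit (u n) = carry p q n := by
  rw [← hu.map_mod_nat, ← carry_periodic.map_mod_nat]
  suffices ∀ m < q, leadingBit (u m) = carry p q m from this _ (Nat.mod_lt n hq)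
  intro m hm
  rcases Nat.lt_or_ge q 2 with hq1 | hq2
  · obtain rfl : q = 1 := by omega
    obtain rfl : m = 0 := by omega
    have h0 := h 0
    rw [← hu.map_mod_nat (0 + p), Nat.mod_one] at h0
    have := hu1 0
    simp only [carry, leadingBit, Nat.mod_one] at h0 ⊢
    split_ifs at h0 ⊢ <;> push_cast at h0 <;> linarith
  · obtain ⟨hlow, hhigh⟩ := two_mul_lt_one_and_one_le_two_mul hq2 hpq hu hmono h
    unfold leadingBit carry
    rw [Nat.mod_eq_of_lt hm]
    split_ifs with h1 h2 h2
    · rfl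
    · have := hmono.monotoneOn hm (show q - 1 - p % q < q by omega)
        (show m ≤ q - 1 - p % q by omega)
      linarith
    · have := hmono.monotoneOn (show q - p % q < q by omega) hm (show q - p % q ≤ m by omega)
      linarith
    · rfl

lemma eq_sturmPoint_of_strictMonoOn_rep (hq : 0 < q) (hpq : p.Coprime q) {e : ℕ → 𝕋}
    (hper : Periodic e q) (hdbl : ∀ n, dbl (e n) = e (n + p))
    (hmono : StrictMonoOn (fun n => rep (e n)) (Set.Iio q)) : e = sturmPoint p q := by
  set u := fun n => rep (e n)
  have hu : Periodic u q := fun n => by simp only [u, hper n]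
  have h2u : ∀ n, 2 * u n = leadingBit (u n) + u (n + p) := fun n =>
    two_mul_eq_leadingBit_add (rep_mem_Ico _) (rep_mem_Ico _) (by simp only [u, coe_rep, hdbl])
  have hcarry := leadingBit_eq_carry hq hpq hu hmono (fun n => (rep_mem_Ico _).2) h2u
  simp only [hcarry] at h2u
  funext n
  rw [← coe_rep (e n), sturmPoint, sturmValue, ← mul_eq_code hu h2u n,
    mul_div_cancel_left₀ _ (two_pow_sub_one_pos hq).ne']

theorem _root_.IsSturmianOrbit.eq_range_sturmPoint (hq : 0 < q) (hpq : p.Coprime q)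
    {O : Set 𝕋} (h : IsSturmianOrbit p q O) : O = Set.range (sturmPoint p q) := by
  obtain ⟨e, hper, hinj, rfl, hord, hdbl⟩ := h
  replace hper : Periodic e q := hper
  obtain ⟨s, hs⟩ := exists_strictMonoOn_rep_comp_add hq hper hinj hord
  have hrot := eq_sturmPoint_of_strictMonoOn_rep hq hpq (hper.add_const s)
    (fun n => by simp only [hdbl, Nat.add_right_comm]) hs
  rw [← hrot, hper.range_comp_add hq]

theorem _root_.IsSturmianOrbit.ncard_eq (hq : 0 < q) {O : Set 𝕋} (h : IsSturmianOrbit p q O) :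
    O.ncard = q := by
  obtain ⟨e, hper, hinj, rfl, -, -⟩ := h
  replace hper : Periodic e q := hper
  have himage : Set.range e = e '' Set.Iio q :=
    (Set.image_subset_range e _).antisymm' fun _ ⟨m, hm⟩ =>
      ⟨m % q, Nat.mod_lt m hq, (hper.map_mod_nat m).trans hm⟩
  rw [himage, hinj.ncard_image, Set.ncard_Iio_nat]

end Orbit

end Sturmian

/-- For every rational p/q in lowest terms with q ≥ 1, there is a unique periodic
Sturmian orbit of the doubling map of rotation number p/q, and it has exactly q points. -/
theorem sturmian_orbit_exists_unique (p q : ℕ) (hq : 1 ≤ q) (hpq : Nat.Coprime p q) :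
    (∃! O : Set (AddCircle (1:ℝ)), IsSturmianOrbit p q O) ∧
    (∀ O : Set (AddCircle (1:ℝ)), IsSturmianOrbit p q O → O.ncard = q) :=
  ⟨⟨Set.range (Sturmian.sturmPoint p q), Sturmian.isSturmianOrbit_range_sturmPoint hq hpq,
    fun _ hO => hO.eq_range_sturmPoint hq hpq⟩, fun _ hO => hO.ncard_eq hq⟩
end
end

section
/- For any rational p/q in lowest terms, the lexicographically minimal cyclic shift m of the period block of the Sturmian sequence of rotation number p/q is the reversal of the lexicographically maximal cyclic shift M; that is, if M = v₁v₂⋯v_q then m = v_q v_{q−1}⋯v₁. -/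
/-!
With `r = k p mod q` we have `⌊(n + k) p / q⌋ = ⌊k p / q⌋ + ⌊(r + n p) / q⌋`, so the shift by `k`
is the block of forward differences of `n ↦ ⌊(r + n p) / q⌋` and depends only on `r`. For
`r < r'` the partial sums `⌊(r + n p) / q⌋ ≤ ⌊(r' + n p) / q⌋` agree at `n = 0` and separate as
soon as `q ∣ r' + n p`, which happens within `q` steps; so the block is strictly increasing in `r`
for the lexicographic order. As `p` is invertible mod `q`, every residue occurs: the minimum is at
`r = 0` and the maximum at `r = q - 1`. Finally
`⌊(q - 1 + m p) / q⌋ = ⌈m p / q⌉ = p - ⌊(q - m) p / q⌋`, and the forward differences of `m ↦ p - F (q - m)` are those of `F` read backwards.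
-/

/-- The period block of the mechanical word of rotation number `p/q`, shifted by `k`. -/
noncomputable def sturmianBlock (p q k : ℕ) : List ℤ :=
  (List.range q).map fun n =>
    ⌊(((n + k + 1 : ℕ) : ℝ)) * p / q⌋ - ⌊(((n + k : ℕ) : ℝ)) * p / q⌋

/-- Lexicographic order on blocks. -/
def blockLE (l₁ l₂ : List ℤ) : Prop := List.Lex (· < ·) l₁ l₂ ∨ l₁ = l₂

open fwdDiff

theorem List.lex_map_range_fwdDiff_of_le {α : Type*} [AddCommGroup α] [LinearOrder α]
    [IsOrderedAddMonoid α] {F G : ℕ → α} {q N : ℕ} (h0 : F 0 = G 0) (hle : ∀ n, F n ≤ G n)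
    (hN : N ≤ q) (hlt : F N < G N) :
    List.Lex (· < ·) ((List.range q).map (Δ_[1] F)) ((List.range q).map (Δ_[1] G)) := by
  induction q generalizing F G N with
  | zero => obtain rfl := Nat.le_zero.mp hN; exact absurd h0 hlt.ne
  | succ q ih =>
    simp only [List.range_succ_eq_map, List.map_cons, List.map_map]
    rcases (hle 1).lt_or_eq with h1 | h1
    · refine List.Lex.rel ?_
      simpa [fwdDiff, h0] using h1
    · have hhead : Δ_[1] F 0 = Δ_[1] G 0 := by simp [fwdDiff, h0, h1]
      rw [hhead]
      obtain ⟨N, rfl⟩ : ∃ N', N = N' + 1 :=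
        Nat.exists_eq_add_one.mpr (Nat.pos_of_ne_zero (by rintro rfl; exact hlt.ne h0))
      exact List.Lex.cons (ih (F := fun n ↦ F (n + 1)) (G := fun n ↦ G (n + 1)) h1
        (fun n ↦ hle _) (by omega) hlt)

theorem List.reverse_map_range_fwdDiff {G : Type*} [AddCommGroup G] {F F' : ℕ → G} {q : ℕ}
    (c : G) (h : ∀ m ≤ q, F' m = c - F (q - m)) :
    ((List.range q).map (Δ_[1] F')).reverse = (List.range q).map (Δ_[1] F) := by
  rw [← List.map_reverse, List.range_eq_range', List.reverse_range', List.map_map,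
    ← List.range_eq_range']
  refine List.map_congr_left fun j hj ↦ ?_
  have hj : j < q := List.mem_range.mp hj
  simp only [Function.comp_apply, fwdDiff, h _ (by omega : 0 + q - 1 - j + 1 ≤ q),
    h _ (by omega : 0 + q - 1 - j ≤ q)]
  rw [show q - (0 + q - 1 - j + 1) = j by omega, show q - (0 + q - 1 - j) = j + 1 by omega]
  abel

theorem Int.sub_one_add_ediv_eq_sub_ediv {b : ℤ} (hb : 0 < b) (a c : ℤ) :
    (b - 1 + a) / b = c - (b * c - a) / b := by
  have h1 := Int.ediv_mul_le (b * c - a) hb.ne'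
  have h2 := Int.lt_ediv_add_one_mul_self (b * c - a) hb
  rw [Int.ediv_eq_iff_of_pos hb]
  constructor <;> nlinarith

theorem Int.floor_natCast_mul_div_natCast {K : Type*} [Field K] [LinearOrder K]
    [IsStrictOrderedRing K] [FloorRing K] (m p q : ℕ) :
    ⌊(m : K) * p / q⌋ = ((m * p / q : ℕ) : ℤ) := by
  rw [← Nat.cast_mul, ← Int.natCast_floor_eq_floor (by positivity), Nat.floor_div_eq_div]

def mechanicalBlock (p q r : ℕ) : List ℤ :=
  (List.range q).map (Δ_[1] fun n ↦ (((r + n * p) / q : ℕ) : ℤ))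

theorem sturmianBlock_eq_mechanicalBlock (p q k : ℕ) :
    sturmianBlock p q k = mechanicalBlock p q (k * p % q) := by
  obtain rfl | hq := q.eq_zero_or_pos
  · rfl
  have hsplit : ∀ n, (n + k) * p / q = (k * p % q + n * p) / q + k * p / q := fun n ↦ by
    rw [← Nat.add_mul_div_left _ _ hq, add_mul]
    have := Nat.mod_add_div (k * p) q
    congr 1
    omega
  refine List.map_congr_left fun n _ ↦ ?_
  simp only [fwdDiff, Int.floor_natCast_mul_div_natCast, show n + k + 1 = n + 1 + k by omega,
    hsplit]
  push_cast
  ring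

theorem mechanicalBlock_lex_of_lt {p q k r : ℕ} (hk : k ≤ q) (hr : r < k * p % q) :
    List.Lex (· < ·) (mechanicalBlock p q r) (mechanicalBlock p q (k * p % q)) := by
  have hq : 0 < q := by
    rcases q.eq_zero_or_pos with rfl | hq
    · simp [Nat.le_zero.mp hk] at hr
    · exact hq
  have hkq : k * p % q < q := Nat.mod_lt _ hq
  have hdvd : k * p % q + (q - k) * p = q * (p - k * p / q) := by
    have := Nat.mod_add_div (k * p) q
    have : k * p + (q - k) * p = q * p := by rw [← add_mul, Nat.add_sub_cancel' hk]
    rw [Nat.mul_sub]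
    omega
  refine List.lex_map_range_fwdDiff_of_le (N := q - k) ?_ (fun n ↦ ?_) (Nat.sub_le q k) ?_
  · simp [Nat.div_eq_of_lt hkq, Nat.div_eq_of_lt (hr.trans hkq)]
  · exact_mod_cast Nat.div_le_div_right (by omega)
  · rw [hdvd, Nat.mul_div_cancel_left _ hq, Nat.cast_lt, Nat.div_lt_iff_lt_mul hq]
    linarith

theorem blockLE_mechanicalBlock {p q k r : ℕ} (hk : k ≤ q) (hr : r ≤ k * p % q) :
    blockLE (mechanicalBlock p q r) (mechanicalBlock p q (k * p % q)) := by
  rcases hr.lt_or_eq with hr | rfl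
  · exact Or.inl (mechanicalBlock_lex_of_lt hk hr)
  · exact Or.inr rfl

theorem mechanicalBlock_reverse (p q : ℕ) :
    (mechanicalBlock p q (q - 1)).reverse = mechanicalBlock p q 0 := by
  obtain rfl | hq := q.eq_zero_or_pos
  · rfl
  refine List.reverse_map_range_fwdDiff (p : ℤ) fun m hm ↦ ?_
  push_cast [Nat.cast_sub hq, Nat.cast_sub hm]
  rw [Int.sub_one_add_ediv_eq_sub_ediv (by exact_mod_cast hq) _ p]
  ring_nf

/-- The lexicographically minimal cyclic shift of the Sturmian p/q period block is the
reversal of the lexicographically maximal cyclic shift. -/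
theorem sturmian_min_is_reverse_of_max (p q : ℕ) (hq : 0 < q) (hpq : Nat.Coprime p q) :
    ∃ kM km : ℕ, kM < q ∧ km < q ∧
      (∀ k < q, blockLE (sturmianBlock p q k) (sturmianBlock p q kM)) ∧
      (∀ k < q, blockLE (sturmianBlock p q km) (sturmianBlock p q k)) ∧
      sturmianBlock p q km = (sturmianBlock p q kM).reverse := by
  obtain ⟨kM, hkM, hres⟩ := Nat.exists_mul_mod_eq_of_coprime (q - 1) hpq hq.ne'
  have hmax : kM * p % q = q - 1 := by rw [mul_comm, hres, Nat.mod_eq_of_lt (by omega)]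
  refine ⟨kM, 0, hkM, hq, fun k hk ↦ ?_, fun k hk ↦ ?_, ?_⟩ <;>
    simp only [sturmianBlock_eq_mechanicalBlock, zero_mul, Nat.zero_mod]
  · exact blockLE_mechanicalBlock hkM.le (hmax ▸ Nat.le_sub_one_of_lt (Nat.mod_lt _ hq))
  · exact blockLE_mechanicalBlock hk.le (Nat.zero_le _)
  · rw [hmax, mechanicalBlock_reverse]
end

section
/- Every bi-infinite periodic Sturmian binary word of rotation number p/q (in lowest terms) admits a reflection symmetry, i.e., there exists k ∈ ℤ such that the word w satisfies w_{k+n} = w_{k−n} for all n ∈ ℤ, or w_{k+n} = w_{k−1−n} for all n ∈ ℤ (reflection at a letter or between two letters). -/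
lemma floor_int_div_real (a b : ℤ) (hb : 0 < b) : ⌊(a:ℝ)/(b:ℝ)⌋ = a / b := by
  lift b to ℕ using hb.le
  have h : ((a:ℝ)/((b:ℤ):ℝ)) = (((a:ℚ) / (b:ℚ) : ℚ) : ℝ) := by push_cast; ring
  rw [h, Rat.floor_cast, Rat.floor_intCast_div_natCast]

lemma key_int (p q m m' t : ℤ) (hq : 0 < q) (h : (m + m' + 1) * p + 1 = q * t) :
    ((m+1)*p)/q - (m*p)/q = ((m'+1)*p)/q - (m'*p)/q := by
  have hq0 : q ≠ 0 := hq.ne'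
  set A := (m*p)/q with hA
  set r := (m*p)%q with hr
  set B := ((m+1)*p)/q with hB
  set s := ((m+1)*p)%q with hs
  set A' := (m'*p)/q with hA'
  set r' := (m'*p)%q with hr'
  set B' := ((m'+1)*p)/q with hB'
  set s' := ((m'+1)*p)%q with hs'
  have e1 : q*A + r = m*p := Int.mul_ediv_add_emod _ _
  have e2 : q*B + s = (m+1)*p := Int.mul_ediv_add_emod _ _
  have e3 : q*A' + r' = m'*p := Int.mul_ediv_add_emod _ _
  have e4 : q*B' + s' = (m'+1)*p := Int.mul_ediv_add_emod _ _
  have br : 0 ≤ r := Int.emod_nonneg _ hq0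
  have br2 : r < q := Int.emod_lt_of_pos _ hq
  have bs : 0 ≤ s := Int.emod_nonneg _ hq0
  have bs2 : s < q := Int.emod_lt_of_pos _ hq
  have br' : 0 ≤ r' := Int.emod_nonneg _ hq0
  have br2' : r' < q := Int.emod_lt_of_pos _ hq
  have bs' : 0 ≤ s' := Int.emod_nonneg _ hq0
  have bs2' : s' < q := Int.emod_lt_of_pos _ hq
  -- q*(t - (B-A) - A - A') = r' + 1 + s
  have k1 : q * (t - (B-A) - A - A') = r' + 1 + s := by linear_combination -h - e2 - e3
  have k2 : q * (t - (B'-A') - A - A') = r + 1 + s' := by linear_combination -h - e4 - e1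
  set e := t - (B-A) - A - A' with he
  set f := t - (B'-A') - A - A' with hf
  have he1 : e = 1 := by
    have h1 : 0 < e := lt_of_mul_lt_mul_left (a := q) (by rw [mul_zero, k1]; omega) hq.le
    have h2 : e < 2 := lt_of_mul_lt_mul_left (a := q) (by rw [k1]; omega) hq.le
    omega
  have hf1 : f = 1 := by
    have h1 : 0 < f := lt_of_mul_lt_mul_left (a := q) (by rw [mul_zero, k2]; omega) hq.le
    have h2 : f < 2 := lt_of_mul_lt_mul_left (a := q) (by rw [k2]; omega) hq.le
    omega
  rw [he1] at k1
  rw [hf1] at k2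
  have hqq : q * (B - A) = q * (B' - A') := by
    linear_combination e2 - e1 - e4 + e3 + k1 - k2
  have := mul_left_cancel₀ hq0 hqq
  linarith

lemma floor_form (p q : ℤ) (hq : 0 < q) (m : ℤ) :
    ⌊(m:ℝ) * (p:ℝ) / (q:ℝ)⌋ = (m*p)/q := by
  rw [show (m:ℝ) * (p:ℝ) / (q:ℝ) = ((m*p : ℤ):ℝ)/((q:ℤ):ℝ) by push_cast; ring]
  exact floor_int_div_real _ _ hq

/-- Every bi-infinite periodic Sturmian word of rotation number p/q admits a reflection
symmetry, either at a letter or between two adjacent letters. -/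
theorem sturmian_reflection_symmetry (p q : ℤ) (hq : 0 < q) (hpq : IsCoprime p q)
    (w : ℤ → ℤ) (hw : ∀ n : ℤ, w n = ⌊((n+1 : ℤ) : ℝ) * p / q⌋ - ⌊((n : ℤ) : ℝ) * p / q⌋) :
    ∃ k : ℤ, (∀ n : ℤ, w (k + n) = w (k - n)) ∨ (∀ n : ℤ, w (k + n) = w (k - 1 - n)) := by
  obtain ⟨u, v, huv⟩ := hpq
  obtain ⟨k, t, hkt⟩ : ∃ k t : ℤ, (2*k+1)*p + 1 = q*t := by
    rcases Int.even_or_odd q with ⟨c, hc⟩ | ⟨c, hc⟩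
    · have hu : Odd u := by
        rw [← Int.not_even_iff_odd]
        rintro ⟨j, hj⟩
        have h2 : (2:ℤ) ∣ 1 := ⟨j*p + v*c, by subst hj hc; linear_combination -huv⟩
        norm_num at h2
      obtain ⟨j, hj⟩ := hu
      exact ⟨-(j+1), v, by subst hj; linear_combination -huv⟩
    · exact ⟨(c+1)*(-u-1), (-u-1)*p + v, by subst hc; linear_combination -huv⟩
  refine ⟨k, Or.inl fun n => ?_⟩
  rw [hw, hw]
  simp only [floor_form p q hq]
  exact key_int p q (k+n) (k-n) t hq (by linear_combination hkt)
end

section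
/- PSL₂(ℤ) is isomorphic to the free product C₂ * C₃ of a cyclic group of order 2 and a cyclic group of order 3. -/
/-!
`PSL₂(ℤ)` acts on the upper half-plane, and the ping-pong lemma applies to the half-planes
`Re z > 0` and `Re z < 0`: the involution `S : z ↦ -1/z` swaps them, while `ST : z ↦ -1/(z+1)`
and its inverse `T⁻¹S⁻¹ : z ↦ -1/z - 1` both map the right one into the left one.
So `C₂ ∗ C₃ → PSL₂(ℤ)`, sending the generators to `S` and `ST`, is injective; it is surjective
because `S` and `T` generate `SL₂(ℤ)`.
-/

/-- The modular group PSL₂(ℤ) = SL₂(ℤ)/center. -/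
abbrev PSL2Z := Matrix.SpecialLinearGroup (Fin 2) ℤ ⧸
  Subgroup.center (Matrix.SpecialLinearGroup (Fin 2) ℤ)

/-- class of an SL₂(ℤ) matrix in PSL₂(ℤ) -/
abbrev psl (A : Matrix.SpecialLinearGroup (Fin 2) ℤ) : PSL2Z := QuotientGroup.mk A

universe u

open Cardinal MatrixGroups ModularGroup UpperHalfPlane
open scoped Pointwise

namespace Monoid.Coprod

variable {H₁ H₂ : Type u} [Group H₁] [Group H₂]

instance condGroup : ∀ b, Group (cond b H₁ H₂)
  | true => ‹Group H₁›
  | false => ‹Group H₂›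

def toCoprodI : H₁ ∗ H₂ →* CoprodI (fun b => cond b H₁ H₂) :=
  lift (CoprodI.of (M := fun b => cond b H₁ H₂) (i := true))
    (CoprodI.of (M := fun b => cond b H₁ H₂) (i := false))

def ofCoprodI : CoprodI (fun b => cond b H₁ H₂) →* H₁ ∗ H₂ :=
  CoprodI.lift fun
    | true => inl
    | false => inr

theorem ofCoprodI_comp_toCoprodI :
    (ofCoprodI (H₁ := H₁) (H₂ := H₂)).comp toCoprodI = .id _ := by
  ext <;> simp [toCoprodI, ofCoprodI]

theorem toCoprodI_injective : Function.Injective (toCoprodI (H₁ := H₁) (H₂ := H₂)) :=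
  Function.LeftInverse.injective (g := ofCoprodI) (DFunLike.congr_fun ofCoprodI_comp_toCoprodI)

theorem lift_injective_of_ping_pong {G α : Type*} [Group G] [MulAction G α]
    (f₁ : H₁ →* G) (f₂ : H₂ →* G) (hcard : 3 ≤ #H₁ ∨ 3 ≤ #H₂) {X₁ X₂ : Set α}
    (hX₁ : X₁.Nonempty) (hX₂ : X₂.Nonempty) (hdisj : Disjoint X₁ X₂)
    (hpp₁ : ∀ h : H₁, h ≠ 1 → f₁ h • X₂ ⊆ X₁) (hpp₂ : ∀ h : H₂, h ≠ 1 → f₂ h • X₁ ⊆ X₂) :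
    Function.Injective (lift f₁ f₂) := by
  let f : ∀ b, cond b H₁ H₂ →* G := fun
    | true => f₁
    | false => f₂
  have hlift : lift f₁ f₂ = (CoprodI.lift f).comp toCoprodI := by
    ext <;> simp [toCoprodI, f]
  rw [hlift]
  refine (CoprodI.lift_injective_of_ping_pong f ?_ (fun b => cond b X₁ X₂) ?_ ?_ ?_).comp
    toCoprodI_injective
  · right
    rcases hcard with h | h
    exacts [⟨true, h⟩, ⟨false, h⟩]
  · rintro (_ | _)
    exacts [hX₂, hX₁]
  · rintro (_ | _) (_ | _) hij
    exacts [absurd rfl hij, hdisj.symm, hdisj, absurd rfl hij]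
  · rintro (_ | _) (_ | _) hij
    exacts [absurd rfl hij, hpp₂, hpp₁, absurd rfl hij]

end Monoid.Coprod

section zmodPowHom

variable {G : Type*} [Group G] {n : ℕ} {x : G}

noncomputable def zmodPowHom (hx : x ^ n = 1) : Multiplicative (ZMod n) →* G :=
  AddMonoidHom.toMultiplicativeLeft <| ZMod.lift n
    ⟨zmultiplesHom (Additive G) (Additive.ofMul x), by simp [← ofMul_pow, hx]⟩

theorem zmodPowHom_ofAdd_intCast (hx : x ^ n = 1) (k : ℤ) :
    zmodPowHom hx (.ofAdd (k : ZMod n)) = x ^ k := by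
  simp only [zmodPowHom, AddMonoidHom.toMultiplicativeLeft_apply_apply, toAdd_ofAdd, ZMod.lift_coe]
  simp

theorem zmodPowHom_ofAdd_one (hx : x ^ n = 1) : zmodPowHom hx (.ofAdd 1) = x := by
  simpa using zmodPowHom_ofAdd_intCast hx 1

theorem exists_zmodPowHom_eq_pow [NeZero n] (hx : x ^ n = 1) {h : Multiplicative (ZMod n)}
    (h1 : h ≠ 1) : ∃ k, 0 < k ∧ k < n ∧ zmodPowHom hx h = x ^ k := by
  refine ⟨h.toAdd.val, Nat.pos_of_ne_zero ((ZMod.val_ne_zero _).mpr h1), ZMod.val_lt _, ?_⟩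
  have := zmodPowHom_ofAdd_intCast hx (h.toAdd.val : ℤ)
  rwa [Int.cast_natCast, ZMod.natCast_zmod_val, ofAdd_toAdd, zpow_natCast] at this

end zmodPowHom

namespace ModularGroup

theorem S_mul_S : S * S = -1 := by decide

theorem S_mul_T_pow_three : (S * T) ^ 3 = -1 := by decide

theorem neg_one_mem_center : (-1 : SL(2, ℤ)) ∈ Subgroup.center SL(2, ℤ) :=
  Subgroup.mem_center_iff.mpr fun g => by simp

theorem center_le_ker_toPermHom :
    Subgroup.center SL(2, ℤ) ≤ (MulAction.toPermHom SL(2, ℤ) ℍ).ker := by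
  intro A hA
  obtain ⟨r, hr, hrA⟩ := Matrix.SpecialLinearGroup.mem_center_iff.mp hA
  have hA' : A = 1 ∨ A = -1 := by
    rw [Fintype.card_fin, sq_eq_one_iff] at hr
    rcases hr with rfl | rfl
    exacts [.inl (Subtype.ext (by simp [← hrA])), .inr (Subtype.ext (by simp [← hrA]))]
  refine MonoidHom.mem_ker.mpr (Equiv.ext fun z => ?_)
  change A • z = z
  rcases hA' with rfl | rfl
  exacts [one_smul _ z, (SL_neg_smul 1 z).trans (one_smul _ z)]

theorem S_inv_smul (z : ℍ) : S⁻¹ • z = S • z := by rw [S_inv, SL_neg_smul]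

theorem re_S_smul (z : ℍ) : (S • z).re = -z.re / Complex.normSq z := by
  rw [modular_S_smul, ← coe_re, coe_mk, Complex.inv_re, Complex.neg_re, Complex.normSq_neg,
    coe_re, neg_div]

theorem re_S_smul_pos {z : ℍ} (hz : z.re < 0) : 0 < (S • z).re := by
  rw [re_S_smul]
  exact div_pos (neg_pos.mpr hz) (normSq_pos z)

theorem re_S_smul_neg {z : ℍ} (hz : 0 < z.re) : (S • z).re < 0 := by
  rw [re_S_smul]
  exact div_neg_of_neg_of_pos (neg_neg_of_pos hz) (normSq_pos z)

theorem re_S_mul_T_smul_neg {z : ℍ} (hz : 0 < z.re) : ((S * T) • z).re < 0 := by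
  rw [mul_smul]
  refine re_S_smul_neg ?_
  rw [re_T_smul]
  linarith

theorem re_S_mul_T_inv_smul_neg {z : ℍ} (hz : 0 < z.re) : ((S * T)⁻¹ • z).re < 0 := by
  rw [_root_.mul_inv_rev, mul_smul, re_T_inv_smul, S_inv_smul]
  linarith [re_S_smul_neg hz]

end ModularGroup

namespace PSL2Z

noncomputable instance : MulAction PSL2Z ℍ :=
  MulAction.compHom ℍ
    (QuotientGroup.lift _ (MulAction.toPermHom SL(2, ℤ) ℍ) center_le_ker_toPermHom)

theorem psl_smul (A : SL(2, ℤ)) (z : ℍ) : psl A • z = A • z := rfl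

theorem S_sq : psl S ^ 2 = 1 := by
  rw [← QuotientGroup.mk_pow, QuotientGroup.eq_one_iff, sq, S_mul_S]
  exact neg_one_mem_center

theorem S_mul_T_pow_three : psl (S * T) ^ 3 = 1 := by
  rw [← QuotientGroup.mk_pow, QuotientGroup.eq_one_iff, ModularGroup.S_mul_T_pow_three]
  exact neg_one_mem_center

theorem S_mul_T_sq : psl (S * T) ^ 2 = psl ((S * T)⁻¹) := by
  rw [psl, psl, QuotientGroup.mk_inv, eq_inv_iff_mul_eq_one, ← pow_succ, ← psl,
    S_mul_T_pow_three]

theorem closure_S_T : Subgroup.closure {psl S, psl T} = ⊤ := by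
  have := congrArg (Subgroup.map (QuotientGroup.mk' (Subgroup.center SL(2, ℤ))))
    SpecialLinearGroup.SL2Z_generators
  rwa [MonoidHom.map_closure, Subgroup.map_top_of_surjective _ (QuotientGroup.mk'_surjective _),
    Set.image_pair] at this

theorem S_smul_subset : psl S • {z : ℍ | z.re < 0} ⊆ {z | 0 < z.re} :=
  Set.smul_set_subset_iff.mpr fun z hz => by
    rw [Set.mem_ofPred_eq, psl_smul]
    exact re_S_smul_pos hz

theorem S_mul_T_pow_smul_subset {k : ℕ} (hk0 : 0 < k) (hk3 : k < 3) :
    psl (S * T) ^ k • {z : ℍ | 0 < z.re} ⊆ {z | z.re < 0} := by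
  refine Set.smul_set_subset_iff.mpr fun z (hz : 0 < z.re) => ?_
  interval_cases k
  · rw [Set.mem_ofPred_eq, pow_one, psl_smul]
    exact re_S_mul_T_smul_neg hz
  · rw [Set.mem_ofPred_eq, S_mul_T_sq, psl_smul]
    exact re_S_mul_T_inv_smul_neg hz

noncomputable def ofCoprod :
    Monoid.Coprod (Multiplicative (ZMod 2)) (Multiplicative (ZMod 3)) →* PSL2Z :=
  Monoid.Coprod.lift (zmodPowHom S_sq) (zmodPowHom S_mul_T_pow_three)

theorem ofCoprod_injective : Function.Injective ofCoprod := by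
  refine Monoid.Coprod.lift_injective_of_ping_pong _ _ (.inr (by simp [mk_fintype]))
    (X₁ := {z : ℍ | 0 < z.re}) (X₂ := {z | z.re < 0})
    ⟨T • I, by rw [Set.mem_ofPred_eq, re_T_smul, I_re]; norm_num⟩
    ⟨T⁻¹ • I, by rw [Set.mem_ofPred_eq, re_T_inv_smul, I_re]; norm_num⟩
    (Set.disjoint_left.mpr fun z (hz₁ : 0 < z.re) (hz₂ : z.re < 0) => hz₂.not_gt hz₁)
    (fun h h1 => ?_) (fun h h1 => ?_)
  · obtain ⟨k, hk0, hk2, hk⟩ := exists_zmodPowHom_eq_pow S_sq h1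
    obtain rfl : k = 1 := by omega
    rw [hk, pow_one]
    exact S_smul_subset
  · obtain ⟨k, hk0, hk3, hk⟩ := exists_zmodPowHom_eq_pow S_mul_T_pow_three h1
    exact hk ▸ S_mul_T_pow_smul_subset hk0 hk3

theorem ofCoprod_surjective : Function.Surjective ofCoprod := by
  refine MonoidHom.range_eq_top.mp (eq_top_iff.mpr ?_)
  rw [← closure_S_T, Subgroup.closure_le]
  have hS : psl S ∈ ofCoprod.range :=
    ⟨.inl (.ofAdd 1), by simp [ofCoprod, zmodPowHom_ofAdd_one]⟩
  have hST : psl (S * T) ∈ ofCoprod.range :=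
    ⟨.inr (.ofAdd 1), by simp [ofCoprod, zmodPowHom_ofAdd_one]⟩
  have hT : (psl S)⁻¹ * psl (S * T) = psl T := by
    rw [← QuotientGroup.mk_inv, ← QuotientGroup.mk_mul, inv_mul_cancel_left]
  rintro _ (rfl | rfl)
  exacts [hS, hT ▸ mul_mem (inv_mem hS) hST]

end PSL2Z

/-- PSL₂(ℤ) is isomorphic to the free product C₂ * C₃. -/
theorem psl2z_iso_free_product_C2_C3 :
    Nonempty (PSL2Z ≃* Monoid.Coprod (Multiplicative (ZMod 2)) (Multiplicative (ZMod 3))) :=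
  ⟨(MulEquiv.ofBijective _ ⟨PSL2Z.ofCoprod_injective, PSL2Z.ofCoprod_surjective⟩).symm⟩
end
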